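/- Let n ≥ 2 and let p be a monic polynomial of degree n with p(0) = 0, p'(0) ≠ 0, whose nonzero roots all lie on the unit circle. If equality min over critical points ζ of |p(ζ)/(ζ p'(0))| = (n-1)/n holds, then p(z) = z(zⁿ⁻¹ - c) for some c with |c| = 1 — i.e., p(z) = a₁ z + zⁿ up to the normalization (the extremal polynomials are exactly p(z) = a₁ z + aₙ zⁿ). -/

import Mathlib

/-!
Write `p = X * g` with `g` monic of degree `m = n - 1`, roots `z₁, …, zₘ` on the unit circle and
`|g(0)| = 1`, so that the quantity minimised over the critical points `ζ` is `|g(ζ)|`. Comparing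
the two expressions of the resultant of `g` and `p'` gives
`n ^ m * ∏_ζ |g(ζ)| = ∏ᵢ |p'(zᵢ)| = ∏ᵢ |g'(zᵢ)| = |det V(z)|²`, where `V(z)` is the Vandermonde
matrix. Hence if every `|g(ζ)|` is at least `m / n`, then `|det V(z)|² ≥ m ^ m`: equality holds in
Hadamard's bound for a matrix with unimodular entries. By AM-GM on the eigenvalues of the Gram
matrix `V Vᴴ`, whose diagonal entries are `m`, this forces `V Vᴴ = m • 1`. Its off-diagonal
entries `∑_{t<m} (zᵢ z̄ⱼ)ᵗ` vanish, so all `zᵢ ^ m` coincide and `g = X ^ m - c`.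
-/

open Polynomial Finset
open scoped ComplexOrder ComplexConjugate Matrix

theorem Real.eq_of_sum_eq_card_mul_of_pow_card_le_prod {ι : Type*} {s : Finset ι} {x : ι → ℝ}
    {c : ℝ} (hx : ∀ i ∈ s, 0 ≤ x i) (hsum : ∑ i ∈ s, x i = #s * c)
    (hprod : c ^ #s ≤ ∏ i ∈ s, x i) : ∀ i ∈ s, x i = c := by
  rcases s.eq_empty_or_nonempty with rfl | hs
  · simp
  have hcard : (0 : ℝ) < #s := by exact_mod_cast hs.card_pos
  set w : ι → ℝ := fun _ => (#s : ℝ)⁻¹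
  have hw : ∑ i ∈ s, w i = 1 := by simp [w, hcard.ne']
  have hmean : ∑ i ∈ s, w i * x i = c := by
    rw [← Finset.mul_sum, hsum]; field_simp
  have hc : 0 ≤ c := by
    rw [← hmean]; exact Finset.sum_nonneg fun i hi => mul_nonneg (by positivity) (hx i hi)
  have hgeom : c ≤ ∏ i ∈ s, x i ^ w i := by
    rw [Real.finsetProd_rpow s x hx]
    calc c = (c ^ #s) ^ (#s : ℝ)⁻¹ := by
          rw [← Real.rpow_natCast, ← Real.rpow_mul hc, mul_inv_cancel₀ hcard.ne', Real.rpow_one]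
      _ ≤ _ := by gcongr
  have hamgm := Real.geom_mean_le_arith_mean_weighted s w x (fun _ _ => by positivity) hw hx
  have heq := (Real.geom_mean_eq_arith_mean_weighted_iff_of_pos' s w x
    (fun _ _ => by positivity) hw hx).mp (by linarith)
  simpa [hmean] using heq

theorem Matrix.PosSemidef.eq_smul_one_of_pow_card_le_det {𝕜 n : Type*} [RCLike 𝕜] [Fintype n]
    [DecidableEq n] {A : Matrix n n 𝕜} (hA : A.PosSemidef) {c : ℝ}
    (htrace : A.trace = Fintype.card n * c) (hdet : c ^ Fintype.card n ≤ RCLike.re A.det) :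
    A = (c : 𝕜) • 1 := by
  have hH := hA.isHermitian
  have hsum : ∑ i, hH.eigenvalues i = #(univ : Finset n) * c := by
    apply RCLike.ofReal_injective (K := 𝕜)
    rw [card_univ]; push_cast
    rw [← htrace, hH.trace_eq_sum_eigenvalues]
  have hprod : c ^ #(univ : Finset n) ≤ ∏ i, hH.eigenvalues i := by
    rw [card_univ]
    rwa [hH.det_eq_prod_eigenvalues, ← RCLike.ofReal_prod, RCLike.ofReal_re] at hdet
  have hconst := Real.eq_of_sum_eq_card_mul_of_pow_card_le_prod
    (fun i _ => hA.eigenvalues_nonneg i) hsum hprod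
  have hdiag : diagonal (RCLike.ofReal ∘ hH.eigenvalues) = (c : 𝕜) • (1 : Matrix n n 𝕜) := by
    rw [smul_one_eq_diagonal]
    congr 1; funext i; simp [hconst i (mem_univ i)]
  rw [hH.spectral_theorem, hdiag, map_smul, map_one]

theorem Complex.pow_eq_pow_of_geom_sum_mul_conj_eq_zero {a b : ℂ} (hb : ‖b‖ = 1) {m : ℕ}
    (h : ∑ t ∈ range m, (a * conj b) ^ t = 0) : a ^ m = b ^ m := by
  have hbb : b * conj b = 1 := by
    rw [Complex.mul_conj, ← Complex.sq_norm, hb]; norm_num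
  have hm : (a * conj b) ^ m = 1 := by
    linear_combination (mul_geom_sum (a * conj b) m).symm.trans (by rw [h, mul_zero])
  calc a ^ m = a ^ m * (b * conj b) ^ m := by rw [hbb, one_pow, mul_one]
    _ = (a * conj b) ^ m * b ^ m := by ring
    _ = b ^ m := by rw [hm, one_mul]

theorem Matrix.pow_eq_pow_of_pow_le_norm_det_vandermonde_sq {m : ℕ} {z : Fin m → ℂ}
    (hz : ∀ i, ‖z i‖ = 1) (hdet : (m : ℝ) ^ m ≤ ‖(vandermonde z).det‖ ^ 2) (i j : Fin m) :
    z i ^ m = z j ^ m := by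
  set G := vandermonde z * (vandermonde z)ᴴ
  have hG : ∀ i j, G i j = ∑ t ∈ range m, (z i * conj (z j)) ^ t := by
    intro i j
    rw [← Fin.sum_univ_eq_sum_range]
    simp [G, mul_apply, mul_pow]
  have hGdiag : ∀ i, G i i = m := by
    intro i
    simp [hG, Complex.mul_conj, ← Complex.sq_norm, hz i]
  have htrace : G.trace = Fintype.card (Fin m) * ((m : ℝ) : ℂ) := by
    simp only [trace, diag, hGdiag]
    simp
  have hdetG : (m : ℝ) ^ Fintype.card (Fin m) ≤ RCLike.re G.det := by
    rw [det_mul, det_conjTranspose, Complex.star_def, Complex.mul_conj, ← Complex.sq_norm,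
      RCLike.re_to_complex, Complex.ofReal_re, Fintype.card_fin]
    exact hdet
  have hGscalar : G = ((m : ℝ) : ℂ) • 1 :=
    (posSemidef_self_mul_conjTranspose _).eq_smul_one_of_pow_card_le_det htrace hdetG
  rcases eq_or_ne i j with rfl | hij
  · rfl
  · apply Complex.pow_eq_pow_of_geom_sum_mul_conj_eq_zero (hz j)
    rw [← hG, hGscalar]
    simp [hij]

theorem Finset.prod_prod_erase_eq_sq_prod_prod_Ioi {ι M : Type*} [Fintype ι] [LinearOrder ι]
    [LocallyFiniteOrderTop ι] [LocallyFiniteOrderBot ι] [CommMonoid M] {f : ι → ι → M}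
    (hf : ∀ i j, f i j = f j i) :
    ∏ i, ∏ j ∈ univ.erase i, f i j = (∏ i, ∏ j ∈ Ioi i, f i j) ^ 2 := by
  have hsplit : ∀ i, ∏ j ∈ univ.erase i, f i j = (∏ j ∈ Ioi i, f i j) * ∏ j ∈ Iio i, f i j := by
    intro i
    rw [← prod_union (disjoint_left.mpr fun j hi hj => (mem_Ioi.mp hi).not_gt (mem_Iio.mp hj))]
    congr 1; ext j
    simpa only [mem_erase, mem_univ, and_true, mem_union, mem_Ioi, mem_Iio] using
      ne_comm.trans ne_iff_lt_or_gt
  rw [prod_congr rfl fun i _ => hsplit i, prod_mul_distrib, sq]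
  congr 1
  rw [prod_comm' (t' := univ) (s' := fun j => Ioi j) (by simp)]
  exact prod_congr rfl fun i _ => prod_congr rfl fun j _ => hf j i

theorem Polynomial.eval_derivative_prod_X_sub_C {R ι : Type*} [CommRing R] [Fintype ι]
    [DecidableEq ι] (z : ι → R) (i : ι) :
    (derivative (∏ j, (X - C (z j)))).eval (z i) = ∏ j ∈ univ.erase i, (z i - z j) := by
  rw [← Lagrange.nodal_eq, Lagrange.eval_nodal_derivative_eval_node_eq (mem_univ i),
    Lagrange.eval_nodal]

theorem Matrix.norm_det_vandermonde_sq {K : Type*} [NormedField K] {m : ℕ} (z : Fin m → K) :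
    ‖(vandermonde z).det‖ ^ 2 = ∏ i, ‖(derivative (∏ j, (X - C (z j)))).eval (z i)‖ := by
  simp_rw [eval_derivative_prod_X_sub_C, norm_prod]
  rw [prod_prod_erase_eq_sq_prod_prod_Ioi (fun i j => norm_sub_rev (z i) (z j)), det_vandermonde]
  simp_rw [norm_prod, norm_sub_rev]

theorem Multiset.norm_prod {K : Type*} [NormedField K] (s : Multiset K) :
    ‖s.prod‖ = (s.map (‖·‖)).prod :=
  map_multiset_prod normHom s

theorem Polynomial.norm_leadingCoeff_pow_mul_prod_roots_eval_comm {K : Type*} [NormedField K]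
    {f g : K[X]} (hf : f.Splits) (hg : g.Splits) :
    ‖f.leadingCoeff‖ ^ g.natDegree * (f.roots.map fun a => ‖g.eval a‖).prod =
      ‖g.leadingCoeff‖ ^ f.natDegree * (g.roots.map fun b => ‖f.eval b‖).prod := by
  have hfg := resultant_eq_prod_eval f g g.natDegree le_rfl hf
  rw [resultant_comm, resultant_eq_prod_eval g f f.natDegree le_rfl hg] at hfg
  simpa [Multiset.norm_prod, Multiset.map_map] using (congrArg norm hfg).symm

theorem Multiset.exists_map_univ_eq {α : Type*} (s : Multiset α) :
    ∃ z : Fin (card s) → α, univ.val.map z = s := by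
  refine ⟨fun i => s.toList.get (i.cast (length_toList s).symm), ?_⟩
  rw [Fin.univ_val_map]
  conv_rhs => rw [← coe_toList s]
  congr 1
  apply List.ext_get <;> simp

theorem Polynomial.prod_X_sub_C_eq_X_pow_sub_C {K : Type*} [Field K] {m : ℕ} (hm : 0 < m)
    {z : Fin m → K} (hz : Function.Injective z) {c : K} (hc : ∀ i, z i ^ m = c) :
    ∏ i, (X - C (z i)) = X ^ m - C c := by
  refine (eq_of_monic_of_dvd_of_natDegree_le (monic_prod_of_monic _ _ fun i _ => monic_X_sub_C _)
    (monic_X_pow_sub_C c hm.ne') ?_ ?_).symm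
  · refine Fintype.prod_dvd_of_coprime (pairwise_coprime_X_sub_C hz) fun i => ?_
    simp [dvd_iff_isRoot, hc]
  · simp

theorem Polynomial.norm_eval_zero_eq_one_of_roots {K : Type*} [NormedField K] {g : K[X]}
    (hg : g.Monic) (hsplit : g.Splits) (hroots : ∀ z ∈ g.roots, ‖z‖ = 1) :
    ‖g.eval 0‖ = 1 := by
  rw [← coeff_zero_eq_eval_zero, hsplit.coeff_zero_eq_prod_roots_of_monic hg, norm_mul,
    norm_pow, norm_neg, norm_one, one_pow, one_mul, Multiset.norm_prod]
  exact Multiset.prod_eq_one fun x hx => by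
    obtain ⟨z, hz, rfl⟩ := Multiset.mem_map.mp hx
    exact hroots z hz

theorem Polynomial.eval_X_mul_div_mul_eval_derivative_zero {K : Type*} [Field K] (g : K[X])
    {ζ : K} (hζ : ζ ≠ 0) :
    (X * g).eval ζ / (ζ * (derivative (X * g)).eval 0) = g.eval ζ / g.eval 0 := by
  simp [derivative_mul, mul_div_mul_left _ _ hζ]

theorem Polynomial.pow_le_norm_det_vandermonde_sq_of_le_norm_eval_critical {m : ℕ}
    {z : Fin m → ℂ} (hz : ∀ i, ‖z i‖ = 1)
    (hcrit : ∀ ζ ∈ (derivative (X * ∏ i, (X - C (z i)))).roots,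
      (m : ℝ) / (m + 1) ≤ ‖(∏ i, (X - C (z i))).eval ζ‖) :
    (m : ℝ) ^ m ≤ ‖(Matrix.vandermonde z).det‖ ^ 2 := by
  set g := ∏ i, (X - C (z i))
  set q := derivative (X * g)
  have hg : g.Monic := monic_prod_of_monic _ _ fun i _ => monic_X_sub_C _
  have hgdeg : g.natDegree = m := by simp [g]
  have hXg : (X * g).natDegree = m + 1 := by
    rw [monic_X.natDegree_mul hg, natDegree_X, hgdeg, add_comm]
  have hqdeg : q.natDegree = m := by rw [natDegree_derivative, hXg, Nat.add_sub_cancel]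
  have hqlead : q.leadingCoeff = m + 1 := by
    rw [leadingCoeff, hqdeg, coeff_derivative, ← hXg, (monic_X.mul hg).coeff_natDegree]
    simp
  have hcard : Multiset.card q.roots = m := by
    rw [← (IsAlgClosed.splits q).natDegree_eq_card_roots, hqdeg]
  have hgroots : g.roots = univ.val.map z := by
    rw [← roots_multiset_prod_X_sub_C (univ.val.map z), Multiset.map_map]; rfl
  have hqz : ∀ i, ‖q.eval (z i)‖ = ‖(derivative g).eval (z i)‖ := by
    intro i
    have hgzi : g.eval (z i) = 0 := by simp [g, eval_prod, prod_eq_zero (mem_univ i)]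
    simp [q, derivative_mul, hgzi, hz i]
  calc (m : ℝ) ^ m
      = ‖q.leadingCoeff‖ ^ g.natDegree * (m / (m + 1)) ^ Multiset.card q.roots := by
        rw [hqlead, hcard, hgdeg, ← mul_pow]
        congr 1
        norm_cast
        field_simp
    _ ≤ ‖q.leadingCoeff‖ ^ g.natDegree * (q.roots.map fun ζ => ‖g.eval ζ‖).prod := by
        gcongr
        rw [← Multiset.prod_replicate, ← Multiset.map_const']
        exact Multiset.prod_map_le_prod_map₀ _ _ (fun _ _ => by positivity) hcrit
    _ = ‖g.leadingCoeff‖ ^ q.natDegree * (g.roots.map fun a => ‖q.eval a‖).prod :=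
        norm_leadingCoeff_pow_mul_prod_roots_eval_comm (IsAlgClosed.splits q)
          (IsAlgClosed.splits g)
    _ = ∏ i, ‖(derivative g).eval (z i)‖ := by
        rw [hg.leadingCoeff, norm_one, one_pow, one_mul, hgroots, Multiset.map_map,
          ← Finset.prod_eq_multiset_prod]
        exact Finset.prod_congr rfl fun i _ => hqz i
    _ = ‖(Matrix.vandermonde z).det‖ ^ 2 := (Matrix.norm_det_vandermonde_sq z).symm

theorem Polynomial.exists_eq_X_pow_sub_C_of_le_norm_eval_critical {m : ℕ} (hm : 0 < m)
    {g : ℂ[X]} (hg : g.Monic) (hdeg : g.natDegree = m) (hroots : ∀ z ∈ g.roots, ‖z‖ = 1)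
    (hcrit : ∀ ζ ∈ (derivative (X * g)).roots, (m : ℝ) / (m + 1) ≤ ‖g.eval ζ‖) :
    ∃ c : ℂ, ‖c‖ = 1 ∧ g = X ^ m - C c := by
  obtain ⟨z, hz⟩ : ∃ z : Fin m → ℂ, univ.val.map z = g.roots := by
    rw [← hdeg, (IsAlgClosed.splits g).natDegree_eq_card_roots]
    exact g.roots.exists_map_univ_eq
  have hzn : ∀ i, ‖z i‖ = 1 := fun i =>
    hroots _ (hz ▸ Multiset.mem_map_of_mem _ (mem_univ_val i))
  have hgz : g = ∏ i, (X - C (z i)) := by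
    conv_lhs => rw [(IsAlgClosed.splits g).eq_prod_roots_of_monic hg, ← hz, Multiset.map_map]
    rfl
  subst hgz
  have hV := pow_le_norm_det_vandermonde_sq_of_le_norm_eval_critical hzn hcrit
  have hinj : Function.Injective z := by
    refine Matrix.det_vandermonde_ne_zero_iff.mp fun h => ?_
    rw [h, norm_zero] at hV
    linarith [pow_pos (Nat.cast_pos.mpr hm : (0 : ℝ) < m) m]
  have hpow := Matrix.pow_eq_pow_of_pow_le_norm_det_vandermonde_sq hzn hV
  exact ⟨z ⟨0, hm⟩ ^ m, by rw [norm_pow, hzn, one_pow],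
    prod_X_sub_C_eq_X_pow_sub_C hm hinj fun i => hpow i _⟩

theorem maximal_polynomials_characterization (n : ℕ) (hn : 2 ≤ n) (p : Polynomial ℂ)
    (hmonic : p.Monic) (hdeg : p.natDegree = n)
    (h0 : p.eval 0 = 0) (h1 : (Polynomial.derivative p).eval 0 ≠ 0)
    (hroots : ∀ z ∈ p.roots, z ≠ 0 → ‖z‖ = 1)
    (heq : sInf {x : ℝ | ∃ ζ : ℂ, (Polynomial.derivative p).eval ζ = 0 ∧
        x = ‖p.eval ζ / (ζ * (Polynomial.derivative p).eval 0)‖} =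
      ((n : ℝ) - 1) / n) :
    ∃ c : ℂ, ‖c‖ = 1 ∧
      p = Polynomial.X * (Polynomial.X ^ (n - 1) - Polynomial.C c) := by
  have hcritval : ∀ ζ, (derivative p).eval ζ = 0 →
      ((n : ℝ) - 1) / n ≤ ‖p.eval ζ / (ζ * (derivative p).eval 0)‖ := fun ζ hζ =>
    heq ▸ csInf_le ⟨0, by rintro x ⟨ξ, -, rfl⟩; exact norm_nonneg _⟩ ⟨ζ, hζ, rfl⟩
  obtain ⟨m, rfl⟩ : ∃ m, n = m + 1 := ⟨n - 1, by omega⟩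
  obtain ⟨g, rfl⟩ : X ∣ p := X_dvd_iff.mpr (by rwa [coeff_zero_eq_eval_zero])
  have hg : g.Monic := monic_X.of_mul_monic_left hmonic
  have hgdeg : g.natDegree = m := by
    rw [monic_X.natDegree_mul hg, natDegree_X] at hdeg; omega
  have hg0 : (derivative (X * g)).eval 0 = g.eval 0 := by simp [derivative_mul]
  have hgroots : ∀ z ∈ g.roots, ‖z‖ = 1 := by
    intro z hz
    refine hroots z ?_ fun hz0 => h1 ?_
    · rw [roots_mul (monic_X.mul hg).ne_zero]; exact Multiset.mem_add.mpr (Or.inr hz)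
    · subst hz0; rw [hg0]; exact (mem_roots hg.ne_zero).mp hz
  have hgnorm0 := norm_eval_zero_eq_one_of_roots hg (IsAlgClosed.splits g) hgroots
  have hcrit : ∀ ζ ∈ (derivative (X * g)).roots, (m : ℝ) / (m + 1) ≤ ‖g.eval ζ‖ := by
    intro ζ hζ
    have hζ : (derivative (X * g)).eval ζ = 0 := isRoot_of_mem_roots hζ
    have hζ0 : ζ ≠ 0 := by rintro rfl; exact h1 hζ
    have hle := hcritval ζ hζ
    rw [eval_X_mul_div_mul_eval_derivative_zero g hζ0, norm_div, hgnorm0, div_one] at hle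
    simpa using hle
  obtain ⟨c, hc, rfl⟩ :=
    exists_eq_X_pow_sub_C_of_le_norm_eval_critical (by omega) hg hgdeg hgroots hcrit
  exact ⟨c, hc, by simp⟩
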